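/- Let v be a linear classifier on [0,1]^n with weights w and threshold q, and suppose w_i > w_j > 0. Define B_ij = {(x, b) ∈ Piv_j \ Piv_i : (f_ij(x), b) ∈ Piv_i} and C_ij = {(x, b) ∈ Piv_j \ Piv_i : (f_ij(x), b) ∉ Piv_i}, and the maps F_ij(x, b) = (f_ij(x), b) and G_ij(x, b) = (g_ij(x, b), x_i). Then F_ij(B_ij) ∩ G_ij(C_ij) = ∅. -/

import Mathlib

open MeasureTheory

/-- The linear classifier on ℝ^n with weights w and threshold q. -/
noncomputable def linClass {n : ℕ} (w : Fin n → ℝ) (q : ℝ) (x : Fin n → ℝ) : ℝ :=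
  if q ≤ ∑ k, w k * x k then 1 else 0

/-- The unit cube [0,1]^n. -/
def unitCube (n : ℕ) : Set (Fin n → ℝ) := Set.univ.pi fun _ => Set.Icc 0 1

/-- Piv_i(b): points of the cube that are losing but become winning when
coordinate i is set to b. -/
noncomputable def pivSet {n : ℕ} (w : Fin n → ℝ) (q : ℝ) (i : Fin n) (b : ℝ) :
    Set (Fin n → ℝ) :=
  {x | x ∈ unitCube n ∧ linClass w q x = 0 ∧
    linClass w q (Function.update x i b) = 1}

/-- Piv_i ⊆ [0,1]^{n+1}: pairs (x, b) with x ∈ Piv_i(b). -/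
noncomputable def piv {n : ℕ} (w : Fin n → ℝ) (q : ℝ) (i : Fin n) :
    Set ((Fin n → ℝ) × ℝ) :=
  {p | p.2 ∈ Set.Icc (0 : ℝ) 1 ∧ p.1 ∈ pivSet w q i p.2}

/-- The map f_ij swapping coordinates i and j. -/
def swapCoords {n : ℕ} (i j : Fin n) (x : Fin n → ℝ) : Fin n → ℝ :=
  x ∘ Equiv.swap i j

/-- g_ij(x, b): x with coordinate i set to x_j and coordinate j set to b. -/
def gMap {n : ℕ} (i j : Fin n) (x : Fin n → ℝ) (b : ℝ) : Fin n → ℝ :=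
  Function.update (Function.update x i (x j)) j b

/-- F_ij(x, b) = (f_ij(x), b). -/
def Fmap {n : ℕ} (i j : Fin n) (p : (Fin n → ℝ) × ℝ) : (Fin n → ℝ) × ℝ :=
  (swapCoords i j p.1, p.2)

/-- G_ij(x, b) = (g_ij(x, b), x_i). -/
def Gmap {n : ℕ} (i j : Fin n) (p : (Fin n → ℝ) × ℝ) : (Fin n → ℝ) × ℝ :=
  (gMap i j p.1 p.2, p.1 i)

/-!
Suppose `F (x', b') = G (x, b)` with `(x', b') ∈ Piv_j` and `(x, b) ∈ C_ij`. Then `x'` is `x`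
with coordinate `i` set to `b`, and `b' = x i`; so `x'` is losing while `z`, obtained from `x'`
by setting coordinate `j` to `x i`, is winning. As `w j > 0` this forces `x j < x i`, and since
`w i > w j`, swapping coordinates `i` and `j` lowers the score of `x`: `f x` is losing like `x`.
But `z` is also `f x` with coordinate `i` set to `b`, so `(f x, b) ∈ Piv_i`, contradicting
`(x, b) ∈ C_ij`.
-/

open Function Set

section LinearClassifier

variable {n : ℕ} (w : Fin n → ℝ) (q : ℝ)

lemma linClass_eq_zero_iff (x : Fin n → ℝ) : linClass w q x = 0 ↔ ∑ k, w k * x k < q := by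
  rw [← not_le]
  by_cases h : q ≤ ∑ k, w k * x k <;> simp [linClass, h]

lemma linClass_eq_one_iff (x : Fin n → ℝ) : linClass w q x = 1 ↔ q ≤ ∑ k, w k * x k := by
  by_cases h : q ≤ ∑ k, w k * x k <;> simp [linClass, h]

lemma sum_mul_update (x : Fin n → ℝ) (i : Fin n) (b : ℝ) :
    ∑ k, w k * update x i b k = ∑ k, w k * x k + w i * (b - x i) := by
  have hx : update x i b = x + Pi.single i (b - x i) := by
    ext k; rcases eq_or_ne k i with rfl | hk <;> simp [*]
  simp [hx, mul_add, Finset.sum_add_distrib, Pi.single_apply]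

lemma sum_mul_swapCoords (x : Fin n → ℝ) (i j : Fin n) :
    ∑ k, w k * swapCoords i j x k = ∑ k, w k * x k + (w i - w j) * (x j - x i) := by
  rw [swapCoords, Equiv.comp_swap_eq_update, sum_mul_update, sum_mul_update]
  simp only [update_apply, ite_self]
  ring

end LinearClassifier

section Swap

variable {n : ℕ} {i j : Fin n}

lemma swapCoords_involutive (i j : Fin n) : Involutive (swapCoords i j) := fun x => by
  ext k; simp [swapCoords]

lemma swapCoords_mem_unitCube {x : Fin n → ℝ} (hx : x ∈ unitCube n) :
    swapCoords i j x ∈ unitCube n :=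
  fun k _ => hx (Equiv.swap i j k) (mem_univ _)

lemma swapCoords_update_left (hij : i ≠ j) (x : Fin n → ℝ) (b : ℝ) :
    swapCoords i j (update x i b) = gMap i j x b := by
  ext k
  rcases eq_or_ne k i with rfl | hki
  · simp [swapCoords, gMap, hij, hij.symm]
  rcases eq_or_ne k j with rfl | hkj
  · simp [swapCoords, gMap]
  · simp [swapCoords, gMap, Equiv.swap_apply_of_ne_of_ne hki hkj, hki, hkj]

lemma update_swapCoords_left (hij : i ≠ j) (x : Fin n → ℝ) (b : ℝ) :
    update (swapCoords i j x) i b = update (update x i b) j (x i) := by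
  rw [swapCoords, Equiv.comp_swap_eq_update, update_idem, update_comm hij.symm]

lemma Fmap_involutive (i j : Fin n) : Involutive (Fmap i j) := fun p => by
  simp [Fmap, swapCoords_involutive i j p.1]

lemma eq_of_Fmap_eq_Gmap (hij : i ≠ j) {p r : (Fin n → ℝ) × ℝ}
    (h : Fmap i j p = Gmap i j r) :
    p = (update r.1 i r.2, r.1 i) := by
  apply (Fmap_involutive i j).injective
  rw [h]
  simp [Fmap, Gmap, swapCoords_update_left hij]

end Swap

lemma swapCoords_mem_piv {n : ℕ} {w : Fin n → ℝ} {q : ℝ} {i j : Fin n}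
    (hij : w j < w i) (hj : 0 < w j) {x : Fin n → ℝ} {b : ℝ}
    (hx : x ∈ unitCube n) (hb : b ∈ Icc 0 1) (hx0 : linClass w q x = 0)
    (hy0 : linClass w q (update x i b) = 0)
    (hz1 : linClass w q (update (update x i b) j (x i)) = 1) :
    (swapCoords i j x, b) ∈ piv w q i := by
  have hne : i ≠ j := fun h => hij.ne (h ▸ rfl)
  rw [linClass_eq_zero_iff] at hx0 hy0
  rw [linClass_eq_one_iff] at hz1
  rw [sum_mul_update, sum_mul_update, update_apply, if_neg hne.symm] at hz1
  rw [sum_mul_update] at hy0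
  have hji : x j < x i := by nlinarith
  refine ⟨hb, swapCoords_mem_unitCube hx, ?_, ?_⟩
  · rw [linClass_eq_zero_iff, sum_mul_swapCoords]
    nlinarith
  · rw [update_swapCoords_left hne, linClass_eq_one_iff, sum_mul_update, sum_mul_update,
      update_apply, if_neg hne.symm]
    exact hz1

theorem Fmap_Gmap_images_disjoint_general
    {n : ℕ} (w : Fin n → ℝ) (q : ℝ)
    (i j : Fin n) (hij : w j < w i) (hj : 0 < w j) :
    (Fmap i j ''
        {p | p ∈ piv w q j \ piv w q i ∧ Fmap i j p ∈ piv w q i})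
      ∩ (Gmap i j ''
        {p | p ∈ piv w q j \ piv w q i ∧ Fmap i j p ∉ piv w q i})
      = ∅ := by
  have hne : i ≠ j := fun h => hij.ne (h ▸ rfl)
  refine eq_empty_of_forall_notMem ?_
  rintro _ ⟨⟨p, ⟨⟨hpj, -⟩, -⟩, rfl⟩, ⟨⟨x, b⟩, ⟨⟨hxj, -⟩, hFx⟩, hpx⟩⟩
  obtain rfl : p = (update x i b, x i) := eq_of_Fmap_eq_Gmap hne hpx.symm
  obtain ⟨-, -, hy0, hz1⟩ := hpj
  obtain ⟨hb, hx, hx0, -⟩ := hxj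
  exact hFx (swapCoords_mem_piv hij hj hx hb hx0 hy0 hz1)

/-- With B_ij = {(x,b) ∈ Piv_j \ Piv_i : (f_ij(x), b) ∈ Piv_i}
and C_ij = {(x,b) ∈ Piv_j \ Piv_i : (f_ij(x), b) ∉ Piv_i}, the images
F_ij(B_ij) and G_ij(C_ij) are disjoint. -/
theorem Fmap_Gmap_images_disjoint
    {n : ℕ} (hn : 1 ≤ n) (w : Fin n → ℝ) (q : ℝ) (hw : ∀ k, w k ≠ 0)
    (i j : Fin n) (hij : w j < w i) (hj : 0 < w j) :
    (Fmap i j ''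
        {p | p ∈ piv w q j \ piv w q i ∧ Fmap i j p ∈ piv w q i})
      ∩ (Gmap i j ''
        {p | p ∈ piv w q j \ piv w q i ∧ Fmap i j p ∉ piv w q i})
      = ∅ :=
  Fmap_Gmap_images_disjoint_general w q i j hij hj
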